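/- arXiv:2206.12391 — 7 statements merged into one kernel-verified Lean document; each statement's English description precedes it below -/
import Mathlib

section
/- Consider the scheme qⁿ⁺¹ = qⁿ + k M⁻¹ pⁿ⁺¹ᐟ², pⁿ⁺¹ᐟ² = pⁿ⁻¹ᐟ² - (k/2) gⁿ (ψⁿ⁺¹ᐟ² + ψⁿ⁻¹ᐟ²), ψⁿ⁺¹ᐟ² = ψⁿ⁻¹ᐟ² + (1/2)(gⁿ)ᵀ(qⁿ⁺¹ - qⁿ⁻¹). Then the quantity Hⁿ⁺¹ᐟ² = (1/2)(pⁿ⁺¹ᐟ²)ᵀM⁻¹pⁿ⁺¹ᐟ² + (1/2)(ψⁿ⁺¹ᐟ²)² satisfies Hⁿ⁺¹ᐟ² = Hⁿ⁻¹ᐟ² for every n, regardless of the values of the vectors gⁿ. -/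
open Matrix

/-- Exact conservation of the numerical energy
`Hⁿ⁺¹ᐟ² = ½ (pⁿ⁺¹ᐟ²)ᵀM⁻¹pⁿ⁺¹ᐟ² + ½ (ψⁿ⁺¹ᐟ²)²` for the scheme (fd1),
regardless of the values of the vectors `gⁿ`.
Indexing: `p n` and `ψ n` stand for `pⁿ⁺¹ᐟ²` and `ψⁿ⁺¹ᐟ²`, `q n` for `qⁿ`,
`g n` for `gⁿ`. -/
theorem stmt_4 {N : ℕ} (k : ℝ) (hk : 0 < k)
    (M : Matrix (Fin N) (Fin N) ℝ) (hM : M.PosDef)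
    (q p g : ℕ → Fin N → ℝ) (ψ : ℕ → ℝ)
    (hq : ∀ n, q (n + 1) = q n + k • M⁻¹.mulVec (p n))
    (hp : ∀ n, p (n + 1) = p n - (k / 2 * (ψ (n + 1) + ψ n)) • g (n + 1))
    (hψ : ∀ n, ψ (n + 1) = ψ n + (1 / 2) * (g (n + 1) ⬝ᵥ (q (n + 2) - q n))) :
    ∀ n, (1 / 2) * (p (n + 1) ⬝ᵥ M⁻¹.mulVec (p (n + 1))) + (1 / 2) * ψ (n + 1) ^ 2
      = (1 / 2) * (p n ⬝ᵥ M⁻¹.mulVec (p n)) + (1 / 2) * ψ n ^ 2 := by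
  intro n
  have hk0 : k ≠ 0 := ne_of_gt hk
  have hAT : M⁻¹ᵀ = M⁻¹ := by
    rw [Matrix.transpose_nonsing_inv]
    congr 1
    have := hM.isHermitian.eq
    simpa using this
  have hsym : ∀ v w : Fin N → ℝ, v ⬝ᵥ M⁻¹.mulVec w = w ⬝ᵥ M⁻¹.mulVec v := by
    intro v w
    rw [Matrix.dotProduct_mulVec, ← Matrix.mulVec_transpose, hAT, dotProduct_comm]
  set c : ℝ := k / 2 * (ψ (n + 1) + ψ n) with hc
  set s : ℝ := g (n + 1) ⬝ᵥ M⁻¹.mulVec (p n) with hs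
  set u : ℝ := g (n + 1) ⬝ᵥ M⁻¹.mulVec (g (n + 1)) with hu
  -- q difference
  have hqd : q (n + 2) - q n = k • M⁻¹.mulVec (p n) + k • M⁻¹.mulVec (p (n + 1)) := by
    have h1 := hq (n + 1)
    have h2 := hq n
    rw [h1, h2]
    abel
  have ht : g (n + 1) ⬝ᵥ M⁻¹.mulVec (p (n + 1)) = s - c * u := by
    rw [hp n, Matrix.mulVec_sub, Matrix.mulVec_smul, dotProduct_sub,
      dotProduct_smul, smul_eq_mul]
  have hgq : g (n + 1) ⬝ᵥ (q (n + 2) - q n) = k * (2 * s - c * u) := by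
    rw [hqd, dotProduct_add, dotProduct_smul, dotProduct_smul,
      smul_eq_mul, smul_eq_mul, ht]
    ring
  have hψ' : ψ (n + 1) = ψ n + (1 / 2) * (k * (2 * s - c * u)) := by
    rw [hψ n, hgq]
  have hpp : p (n + 1) ⬝ᵥ M⁻¹.mulVec (p (n + 1))
      = p n ⬝ᵥ M⁻¹.mulVec (p n) - 2 * c * s + c ^ 2 * u := by
    rw [hp n, Matrix.mulVec_sub, Matrix.mulVec_smul,
      sub_dotProduct, dotProduct_sub, dotProduct_sub,
      smul_dotProduct, smul_dotProduct, dotProduct_smul,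
      dotProduct_smul, smul_eq_mul, smul_eq_mul, smul_eq_mul, smul_eq_mul,
      hsym (p n) (g (n + 1))]
    ring
  rw [hpp]
  have hcc : ψ (n + 1) + ψ n = 2 * c / k := by
    rw [hc]; field_simp
  have hdiff : ψ (n + 1) ^ 2 - ψ n ^ 2 = 2 * c * s - c ^ 2 * u := by
    have h1 : ψ (n + 1) - ψ n = (1 / 2) * (k * (2 * s - c * u)) := by
      rw [hψ']; ring
    have : ψ (n + 1) ^ 2 - ψ n ^ 2 = (ψ (n + 1) + ψ n) * (ψ (n + 1) - ψ n) := by ring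
    rw [this, hcc, h1]
    field_simp
  nlinarith [hdiff]
end

section
/- Consider the split scheme qⁿ⁺¹ = qⁿ + k M⁻¹pⁿ⁺¹ᐟ², pⁿ⁺¹ᐟ² = pⁿ⁻¹ᐟ² - kKqⁿ - (k/2)gⁿ(ψⁿ⁺¹ᐟ² + ψⁿ⁻¹ᐟ²), ψⁿ⁺¹ᐟ² = ψⁿ⁻¹ᐟ² + (1/2)(gⁿ)ᵀ(qⁿ⁺¹ - qⁿ⁻¹), with K symmetric. Then Hⁿ⁺¹ᐟ² = (1/2)(pⁿ⁺¹ᐟ²)ᵀM⁻¹pⁿ⁺¹ᐟ² + (1/2)(qⁿ⁺¹)ᵀKqⁿ + (1/2)(ψⁿ⁺¹ᐟ²)² is constant in n. -/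
open Matrix

/-- Exact conservation of
`Hⁿ⁺¹ᐟ² = ½ (pⁿ⁺¹ᐟ²)ᵀM⁻¹pⁿ⁺¹ᐟ² + ½ (qⁿ⁺¹)ᵀKqⁿ + ½ (ψⁿ⁺¹ᐟ²)²`
for the split-potential scheme (fd2). Indexing: `p n`, `ψ n` stand for
`pⁿ⁺¹ᐟ²`, `ψⁿ⁺¹ᐟ²`, and `q n` for `qⁿ`, `g n` for `gⁿ`. -/
theorem stmt_6 {N : ℕ} (k : ℝ) (hk : 0 < k)
    (M K : Matrix (Fin N) (Fin N) ℝ) (hM : M.PosDef) (hK : K.PosSemidef)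
    (q p g : ℕ → Fin N → ℝ) (ψ : ℕ → ℝ)
    (hq : ∀ n, q (n + 1) = q n + k • M⁻¹.mulVec (p n))
    (hp : ∀ n, p (n + 1) = p n - k • K.mulVec (q (n + 1))
        - (k / 2 * (ψ (n + 1) + ψ n)) • g (n + 1))
    (hψ : ∀ n, ψ (n + 1) = ψ n + (1 / 2) * (g (n + 1) ⬝ᵥ (q (n + 2) - q n))) :
    ∀ n, (1 / 2) * (p (n + 1) ⬝ᵥ M⁻¹.mulVec (p (n + 1)))
        + (1 / 2) * (q (n + 2) ⬝ᵥ K.mulVec (q (n + 1)))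
        + (1 / 2) * ψ (n + 1) ^ 2
      = (1 / 2) * (p n ⬝ᵥ M⁻¹.mulVec (p n))
        + (1 / 2) * (q (n + 1) ⬝ᵥ K.mulVec (q n))
        + (1 / 2) * ψ n ^ 2 := by
  intro n
  have hk' : k ≠ 0 := ne_of_gt hk
  have symm_dot : ∀ (A : Matrix (Fin N) (Fin N) ℝ), Aᵀ = A →
      ∀ x y : Fin N → ℝ, x ⬝ᵥ A.mulVec y = y ⬝ᵥ A.mulVec x := by
    intro A hA x y
    rw [Matrix.dotProduct_mulVec, ← Matrix.mulVec_transpose, hA, dotProduct_comm]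
  have hMT : M⁻¹ᵀ = M⁻¹ := by
    rw [Matrix.transpose_nonsing_inv]
    congr 1
    simpa using hM.isHermitian.eq
  have hKT : Kᵀ = K := by simpa using hK.isHermitian.eq
  have hd : q (n + 2) - q n = k • (M⁻¹.mulVec (p n) + M⁻¹.mulVec (p (n + 1))) := by
    rw [hq (n + 1), hq n]
    module
  have huv : M⁻¹.mulVec (p n) + M⁻¹.mulVec (p (n + 1)) = k⁻¹ • (q (n + 2) - q n) := by
    rw [hd, smul_smul, inv_mul_cancel₀ hk', one_smul]
  have hpd : p (n + 1) - p n = (-k) • K.mulVec (q (n + 1))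
      - (k / 2 * (ψ (n + 1) + ψ n)) • g (n + 1) := by
    rw [hp n]; module
  have hkin : p (n + 1) ⬝ᵥ M⁻¹.mulVec (p (n + 1)) - p n ⬝ᵥ M⁻¹.mulVec (p n)
      = (p (n + 1) - p n) ⬝ᵥ (k⁻¹ • (q (n + 2) - q n)) := by
    rw [← huv]
    have h := symm_dot M⁻¹ hMT (p n) (p (n + 1))
    simp only [sub_dotProduct, dotProduct_add]
    linarith
  have hkin2 : (p (n + 1) - p n) ⬝ᵥ (k⁻¹ • (q (n + 2) - q n))
      = -(K.mulVec (q (n + 1)) ⬝ᵥ (q (n + 2) - q n))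
        - (1 / 2 * (ψ (n + 1) + ψ n)) * (g (n + 1) ⬝ᵥ (q (n + 2) - q n)) := by
    rw [hpd]
    simp only [sub_dotProduct, smul_dotProduct, dotProduct_smul, smul_eq_mul]
    field_simp
  have hpot : q (n + 2) ⬝ᵥ K.mulVec (q (n + 1)) - q (n + 1) ⬝ᵥ K.mulVec (q n)
      = K.mulVec (q (n + 1)) ⬝ᵥ (q (n + 2) - q n) := by
    rw [symm_dot K hKT (q (n + 1)) (q n), dotProduct_sub,
      dotProduct_comm (K.mulVec (q (n + 1))) (q (n + 2)),
      dotProduct_comm (K.mulVec (q (n + 1))) (q n)]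
  have hpsi : ψ (n + 1) - ψ n = 1 / 2 * (g (n + 1) ⬝ᵥ (q (n + 2) - q n)) := by
    rw [hψ n]; ring
  linear_combination (1 / 2) * (hkin.trans hkin2) + (1 / 2) * hpot
    + (1 / 2) * (ψ (n + 1) + ψ n) * hpsi
end

section
/- Let M be symmetric positive definite with Cholesky-type factorization M⁻¹ = M^{-T/2} M^{-1/2}, K symmetric positive semi-definite, and p, q, q' ∈ ℝᴺ with q' - q = k M⁻¹ p. If k² ≤ 4 / λ_max(M^{-1/2} K M^{-T/2}), then (1/2)pᵀM⁻¹p + (1/2)(q')ᵀKq + (1/2)ψ² ≥ 0 for any ψ ∈ ℝ, and in particular (1/2)pᵀ(M⁻¹ - (k²/4)M⁻¹KM⁻¹)p ≥ 0. -/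
/-!
With `w = M^{-1/2} p` and `u = M⁻¹ p`, one has `pᵀM⁻¹p = |w|²` and
`pᵀM⁻¹KM⁻¹p = uᵀKu = wᵀ(M^{-1/2} K M^{-T/2})w ≤ λ_max |w|²`, so `k² ≤ 4/λ_max` gives
`(k²/4) uᵀKu ≤ pᵀM⁻¹p`, the second claim. For the first, substitute `q = q' - k u` and
complete the square: `q'ᵀK(q' - k u) = vᵀKv - (k²/4) uᵀKu` with `v = q' - (k/2) u`, and
`vᵀKv ≥ 0`.
-/

open Matrix

theorem Matrix.dotProduct_transpose_mul_mul_mulVec {m n α : Type*} [Fintype m] [Fintype n]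
    [CommSemiring α] (B : Matrix m n α) (C : Matrix m m α) (x : n → α) :
    x ⬝ᵥ (Bᵀ * C * B) *ᵥ x = (B *ᵥ x) ⬝ᵥ C *ᵥ (B *ᵥ x) := by
  rw [← mulVec_mulVec, ← mulVec_mulVec, dotProduct_transpose_mulVec, dotProduct_comm]

theorem Matrix.IsHermitian.posSemidef_smul_one_sub {n : Type*} [Fintype n] [DecidableEq n]
    {A : Matrix n n ℝ} (hA : A.IsHermitian) {c : ℝ}
    (hc : ∀ (μ : ℝ) (v : n → ℝ), v ≠ 0 → A *ᵥ v = μ • v → μ ≤ c) :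
    (c • 1 - A).PosSemidef := by
  have hB : (c • 1 - A).IsHermitian := (isHermitian_one.smul (IsSelfAdjoint.all c)).sub hA
  refine hB.posSemidef_iff_eigenvalues_nonneg.mpr fun i => ?_
  set v : n → ℝ := ⇑(hB.eigenvectorBasis i)
  have hv : v ≠ 0 := by
    simpa [v] using hB.eigenvectorBasis.orthonormal.ne_zero i
  have hAv : A *ᵥ v = (c - hB.eigenvalues i) • v := by
    have := hB.mulVec_eigenvectorBasis i
    rw [sub_mulVec, smul_mulVec, one_mulVec] at this
    rw [sub_smul, ← this, sub_sub_cancel]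
  simpa using hc _ v hv hAv

theorem Matrix.IsHermitian.dotProduct_mulVec_le {n : Type*} [Fintype n] [DecidableEq n]
    {A : Matrix n n ℝ} (hA : A.IsHermitian) {c : ℝ}
    (hc : ∀ (μ : ℝ) (v : n → ℝ), v ≠ 0 → A *ᵥ v = μ • v → μ ≤ c) (x : n → ℝ) :
    x ⬝ᵥ A *ᵥ x ≤ c * (x ⬝ᵥ x) := by
  have := (hA.posSemidef_smul_one_sub hc).dotProduct_mulVec_nonneg x
  rwa [star_trivial, sub_mulVec, smul_mulVec, one_mulVec, dotProduct_sub, dotProduct_smul,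
    smul_eq_mul, sub_nonneg] at this

theorem sq_div_four_mul_le_of_le_mul {k lmax y z : ℝ} (hy : y ≤ lmax * z) (hz : 0 ≤ z)
    (hk : k ^ 2 ≤ 4 / lmax) : k ^ 2 / 4 * y ≤ z := by
  rcases le_or_gt lmax 0 with hl | hl
  · nlinarith [mul_nonpos_of_nonpos_of_nonneg hl hz, sq_nonneg k]
  · have : k ^ 2 * lmax ≤ 4 := (le_div_iff₀ hl).mp hk
    nlinarith [sq_nonneg k]

theorem Matrix.IsHermitian.dotProduct_mulVec_sub_smul {n : Type*} [Fintype n]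
    {K : Matrix n n ℝ} (hK : K.IsHermitian) (k : ℝ) (x u : n → ℝ) :
    x ⬝ᵥ K *ᵥ (x - k • u) =
      (x - (k / 2) • u) ⬝ᵥ K *ᵥ (x - (k / 2) • u) - k ^ 2 / 4 * (u ⬝ᵥ K *ᵥ u) := by
  have hux : u ⬝ᵥ K *ᵥ x = x ⬝ᵥ K *ᵥ u := by
    rw [← dotProduct_transpose_mulVec, (isHermitian_iff_isSymm.mp hK).eq]
  simp only [mulVec_sub, mulVec_smul, dotProduct_sub, sub_dotProduct, dotProduct_smul,
    smul_dotProduct, smul_eq_mul, hux]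
  ring

theorem sq_div_four_mul_dotProduct_mulVec_le {n : Type*} [Fintype n] [DecidableEq n]
    {B S K : Matrix n n ℝ} (hS : S = Bᵀ * B) (hK : K.IsHermitian) {lmax k : ℝ}
    (hlmax : ∀ (μ : ℝ) (v : n → ℝ), v ≠ 0 → (B * K * Bᵀ) *ᵥ v = μ • v → μ ≤ lmax)
    (hk : k ^ 2 ≤ 4 / lmax) (p : n → ℝ) :
    k ^ 2 / 4 * (p ⬝ᵥ (S * K * S) *ᵥ p) ≤ p ⬝ᵥ S *ᵥ p := by
  have hA : (B * K * Bᵀ).IsHermitian := by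
    simpa using isHermitian_mul_mul_conjTranspose B hK
  have hSKS : S * K * S = Bᵀ * (B * K * Bᵀ) * B := by simp only [hS, Matrix.mul_assoc]
  have hSp : p ⬝ᵥ S *ᵥ p = (B *ᵥ p) ⬝ᵥ (B *ᵥ p) := by
    simpa [hS] using dotProduct_transpose_mul_mul_mulVec B 1 p
  rw [hSKS, dotProduct_transpose_mul_mul_mulVec, hSp]
  exact sq_div_four_mul_le_of_le_mul (hA.dotProduct_mulVec_le hlmax _)
    (dotProduct_self_star_nonneg _) hk

theorem stmt_8_general {N : ℕ} (k : ℝ)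
    (M K Mih : Matrix (Fin N) (Fin N) ℝ) (hK : K.PosSemidef)
    (hMih : M⁻¹ = Mihᵀ * Mih)
    (lmax : ℝ)
    (hlmax_max : ∀ (μ : ℝ) (v : Fin N → ℝ), v ≠ 0 →
      (Mih * K * Mihᵀ).mulVec v = μ • v → μ ≤ lmax)
    (hstab : k ^ 2 ≤ 4 / lmax)
    (p q q' : Fin N → ℝ) (hq' : q' - q = k • M⁻¹.mulVec p) :
    (∀ ψ : ℝ,
      0 ≤ (1 / 2) * (p ⬝ᵥ M⁻¹.mulVec p) + (1 / 2) * (q' ⬝ᵥ K.mulVec q)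
          + (1 / 2) * ψ ^ 2) ∧
    0 ≤ (1 / 2) * (p ⬝ᵥ (M⁻¹ - (k ^ 2 / 4) • (M⁻¹ * K * M⁻¹)).mulVec p) := by
  set u := M⁻¹ *ᵥ p
  have hstable := sq_div_four_mul_dotProduct_mulVec_le hMih hK.isHermitian hlmax_max hstab p
  have huKu : u ⬝ᵥ K *ᵥ u = p ⬝ᵥ (M⁻¹ * K * M⁻¹) *ᵥ p := by
    have hSymm : M⁻¹ᵀ = M⁻¹ := by rw [hMih, transpose_mul, transpose_transpose]
    nth_rw 1 [← hSymm]
    rw [dotProduct_transpose_mul_mul_mulVec]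
  have hq : q = q' - k • u := by rw [← hq', sub_sub_cancel]
  refine ⟨fun ψ => ?_, ?_⟩
  · have hsq := hK.dotProduct_mulVec_nonneg (q' - (k / 2) • u)
    rw [star_trivial] at hsq
    rw [hq, hK.isHermitian.dotProduct_mulVec_sub_smul, huKu]
    nlinarith [sq_nonneg ψ]
  · rw [sub_mulVec, dotProduct_sub, smul_mulVec, dotProduct_smul, smul_eq_mul]
    linarith

/-- Conditional stability of the split-potential scheme: with
`M⁻¹ = M^{-T/2} M^{-1/2}` (`Mih` denotes `M^{-1/2}`), `K` symmetric positive
semi-definite, `λmax` the largest eigenvalue of `M^{-1/2} K M^{-T/2}`, and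
`q' - q = k M⁻¹ p`, the condition `k² ≤ 4/λmax` implies
`½ pᵀM⁻¹p + ½ (q')ᵀKq + ½ ψ² ≥ 0` for every `ψ`, and in particular
`½ pᵀ(M⁻¹ - (k²/4) M⁻¹KM⁻¹)p ≥ 0`. -/
theorem stmt_8 {N : ℕ} (k : ℝ) (hk : 0 < k)
    (M K Mih : Matrix (Fin N) (Fin N) ℝ) (hM : M.PosDef) (hK : K.PosSemidef)
    (hMih : M⁻¹ = Mihᵀ * Mih)
    (lmax : ℝ)
    (hlmax_eig : ∃ v : Fin N → ℝ, v ≠ 0 ∧ (Mih * K * Mihᵀ).mulVec v = lmax • v)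
    (hlmax_max : ∀ (μ : ℝ) (v : Fin N → ℝ), v ≠ 0 →
      (Mih * K * Mihᵀ).mulVec v = μ • v → μ ≤ lmax)
    (hstab : k ^ 2 ≤ 4 / lmax)
    (p q q' : Fin N → ℝ) (hq' : q' - q = k • M⁻¹.mulVec p) :
    (∀ ψ : ℝ,
      0 ≤ (1 / 2) * (p ⬝ᵥ M⁻¹.mulVec p) + (1 / 2) * (q' ⬝ᵥ K.mulVec q)
          + (1 / 2) * ψ ^ 2) ∧
    0 ≤ (1 / 2) * (p ⬝ᵥ (M⁻¹ - (k ^ 2 / 4) • (M⁻¹ * K * M⁻¹)).mulVec p) :=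
  stmt_8_general k M K Mih hK hMih lmax hlmax_max hstab p q q' hq'
end

section
/- The variable-time-step scheme qⁿ⁺¹ = qⁿ + kⁿ⁺¹ᐟ² M⁻¹pⁿ⁺¹ᐟ², pⁿ⁺¹ᐟ² = pⁿ⁻¹ᐟ² - (kⁿ/2)gⁿ(ψⁿ⁺¹ᐟ² + ψⁿ⁻¹ᐟ²), ψⁿ⁺¹ᐟ² = ψⁿ⁻¹ᐟ² + (kⁿ/2)(gⁿ)ᵀM⁻¹(pⁿ⁺¹ᐟ² + pⁿ⁻¹ᐟ²) exactly conserves Hⁿ⁺¹ᐟ² = (1/2)(pⁿ⁺¹ᐟ²)ᵀM⁻¹pⁿ⁺¹ᐟ² + (1/2)(ψⁿ⁺¹ᐟ²)², for any choice of positive step sizes kⁿ and kⁿ⁺¹ᐟ². -/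
open Matrix

/-- Exact energy conservation for the variable-time-step scheme (fd5), for any
choice of positive step sizes `kⁿ` (`kf`) and `kⁿ⁺¹ᐟ²` (`kh`). Indexing:
`p n`, `ψ n` stand for `pⁿ⁺¹ᐟ²`, `ψⁿ⁺¹ᐟ²`; `q n` for `qⁿ`, `g n` for `gⁿ`. -/
theorem stmt_10 {N : ℕ} (M : Matrix (Fin N) (Fin N) ℝ) (hM : M.PosDef)
    (kf kh : ℕ → ℝ) (hkf : ∀ n, 0 < kf n) (hkh : ∀ n, 0 < kh n)
    (q p g : ℕ → Fin N → ℝ) (ψ : ℕ → ℝ)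
    (hq : ∀ n, q (n + 1) = q n + kh n • M⁻¹.mulVec (p n))
    (hp : ∀ n, p (n + 1) = p n - (kf (n + 1) / 2 * (ψ (n + 1) + ψ n)) • g (n + 1))
    (hψ : ∀ n, ψ (n + 1) = ψ n
        + kf (n + 1) / 2 * (g (n + 1) ⬝ᵥ M⁻¹.mulVec (p (n + 1) + p n))) :
    ∀ n, (1 / 2) * (p (n + 1) ⬝ᵥ M⁻¹.mulVec (p (n + 1))) + (1 / 2) * ψ (n + 1) ^ 2
      = (1 / 2) * (p n ⬝ᵥ M⁻¹.mulVec (p n)) + (1 / 2) * ψ n ^ 2 := by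
  have hMsymm : (M⁻¹)ᵀ = M⁻¹ := by
    have hMt : Mᵀ = M := hM.isHermitian.eq
    rw [Matrix.transpose_nonsing_inv, hMt]
  have hsym : ∀ x y : Fin N → ℝ, x ⬝ᵥ M⁻¹.mulVec y = y ⬝ᵥ M⁻¹.mulVec x := by
    intro x y
    rw [Matrix.dotProduct_mulVec, ← Matrix.mulVec_transpose, hMsymm, dotProduct_comm]
  intro n
  set c : ℝ := kf (n + 1) / 2 * (ψ (n + 1) + ψ n) with hc
  have hpn : p (n + 1) = p n - c • g (n + 1) := hp n
  have hgp : g (n + 1) ⬝ᵥ M⁻¹.mulVec (p n) = p n ⬝ᵥ M⁻¹.mulVec (g (n + 1)) := hsym _ _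
  have hs : ψ (n + 1) = ψ n + kf (n + 1) / 2 *
      (2 * (g (n + 1) ⬝ᵥ M⁻¹.mulVec (p n)) - c * (g (n + 1) ⬝ᵥ M⁻¹.mulVec (g (n + 1)))) := by
    rw [hψ n, hpn]
    simp only [Matrix.mulVec_add, Matrix.mulVec_sub, Matrix.mulVec_smul, dotProduct_add,
      dotProduct_sub, dotProduct_smul, smul_eq_mul, sub_dotProduct, add_dotProduct, smul_dotProduct]
    ring
  have hq2 : p (n + 1) ⬝ᵥ M⁻¹.mulVec (p (n + 1))
      = p n ⬝ᵥ M⁻¹.mulVec (p n) - 2 * c * (g (n + 1) ⬝ᵥ M⁻¹.mulVec (p n))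
        + c ^ 2 * (g (n + 1) ⬝ᵥ M⁻¹.mulVec (g (n + 1))) := by
    rw [hpn]
    simp only [Matrix.mulVec_sub, Matrix.mulVec_smul, dotProduct_sub, dotProduct_smul,
      sub_dotProduct, add_dotProduct, smul_dotProduct, smul_eq_mul, hgp]
    ring
  rw [hq2]
  have hψdiff : ψ (n + 1) - ψ n = kf (n + 1) / 2 *
      (2 * (g (n + 1) ⬝ᵥ M⁻¹.mulVec (p n)) - c * (g (n + 1) ⬝ᵥ M⁻¹.mulVec (g (n + 1)))) := by
    rw [hs]; ring
  have hsum : c = kf (n + 1) / 2 * (ψ (n + 1) + ψ n) := hc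
  linear_combination ((ψ (n + 1) + ψ n) / 2) * hψdiff
    - ((2 * (g (n + 1) ⬝ᵥ M⁻¹.mulVec (p n))
        - c * (g (n + 1) ⬝ᵥ M⁻¹.mulVec (g (n + 1)))) / 2) * hsum
end

section
/- For the semi-discrete nonlinear string system ρA q̈ = (1/h)[D₊∇_ζ V; D₊∇_η V] with ζ = D₋u, η = D₋v, q = [u;v], D₊ = -D₋ᵀ, the semi-discrete energy H = (ρAh/2)‖q̇‖² + V, with V = h Σ_{l=1}^{M} 𝒱(ζ_l, η_l), is conserved: dH/dt = 0 along solutions. -/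
/-!
Differentiating `H`, the kinetic part gives `ρA h (ü ⬝ᵥ u̇ + v̈ ⬝ᵥ v̇)` and, by the chain rule, the
potential part gives `h (∇_ζ𝒱 ⬝ᵥ D₋u̇ + ∇_η𝒱 ⬝ᵥ D₋v̇)`. Substituting the equations of motion and
moving `D₊ = -D₋ᵀ` across the dot product turns the kinetic part into exactly minus the potential part.
-/

open Matrix

section Calculus

variable {𝕜 : Type*} [NontriviallyNormedField 𝕜] {ι κ : Type*} [Fintype ι] {t : 𝕜}

theorem HasDerivAt.dotProduct {f g : 𝕜 → ι → 𝕜} {f' g' : ι → 𝕜}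
    (hf : HasDerivAt f f' t) (hg : HasDerivAt g g' t) :
    HasDerivAt (fun s => f s ⬝ᵥ g s) (f' ⬝ᵥ g t + f t ⬝ᵥ g') t := by
  simpa only [_root_.dotProduct, Finset.sum_add_distrib, Pi.mul_apply] using
    HasDerivAt.fun_sum fun i _ => (hasDerivAt_pi.1 hf i).mul (hasDerivAt_pi.1 hg i)

theorem HasDerivAt.dotProduct_self {f : 𝕜 → ι → 𝕜} {f' : ι → 𝕜} (hf : HasDerivAt f f' t) :
    HasDerivAt (fun s => f s ⬝ᵥ f s) (2 * (f' ⬝ᵥ f t)) t := by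
  convert hf.dotProduct hf using 1
  rw [dotProduct_comm (f t), two_mul]

theorem HasDerivAt.mulVec (A : Matrix κ ι 𝕜) {f : 𝕜 → ι → 𝕜} {f' : ι → 𝕜}
    (hf : HasDerivAt f f' t) : HasDerivAt (fun s => A *ᵥ f s) (A *ᵥ f') t :=
  hasDerivAt_pi.2 fun k => by
    simpa only [Matrix.mulVec, _root_.dotProduct] using
      HasDerivAt.fun_sum fun j _ => (hasDerivAt_pi.1 hf j).const_mul (A k j)

end Calculus

theorem HasDerivAt.sum_comp_pair {ι : Type*} [Fintype ι] {F Fa Fb : ℝ → ℝ → ℝ}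
    (hF : ∀ a b : ℝ, HasFDerivAt (fun z : ℝ × ℝ => F z.1 z.2)
      (Fa a b • ContinuousLinearMap.fst ℝ ℝ ℝ + Fb a b • ContinuousLinearMap.snd ℝ ℝ ℝ) (a, b))
    {α β : ℝ → ι → ℝ} {α' β' : ι → ℝ} {t : ℝ}
    (hα : HasDerivAt α α' t) (hβ : HasDerivAt β β' t) :
    HasDerivAt (fun s => ∑ l, F (α s l) (β s l))
      ((fun l => Fa (α t l) (β t l)) ⬝ᵥ α' + (fun l => Fb (α t l) (β t l)) ⬝ᵥ β') t := by
  have hl (l : ι) := (hF (α t l) (β t l)).comp_hasDerivAt t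
    ((hasDerivAt_pi.1 hα l).prodMk (hasDerivAt_pi.1 hβ l))
  simpa [_root_.dotProduct, Finset.sum_add_distrib, Function.comp_def] using
    HasDerivAt.fun_sum fun l _ => hl l

theorem Matrix.mulVec_dotProduct_of_eq_neg_transpose {m n R : Type*} [Fintype m] [Fintype n]
    [CommRing R] {A : Matrix m n R} {B : Matrix n m R} (hB : B = -Aᵀ) (x : m → R) (y : n → R) :
    B *ᵥ x ⬝ᵥ y = -(x ⬝ᵥ A *ᵥ y) := by
  rw [hB, neg_mulVec, neg_dotProduct, mulVec_transpose, dotProduct_mulVec]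

theorem stmt_16_general (M : ℕ) (h ρA : ℝ)
    (𝒱 Vζ Vη : ℝ → ℝ → ℝ)
    (h𝒱 : ∀ a b : ℝ, HasFDerivAt (fun z : ℝ × ℝ => 𝒱 z.1 z.2)
      (Vζ a b • ContinuousLinearMap.fst ℝ ℝ ℝ
        + Vη a b • ContinuousLinearMap.snd ℝ ℝ ℝ) (a, b))
    (Dm : Matrix (Fin M) (Fin (M - 1)) ℝ)
    (Dp : Matrix (Fin (M - 1)) (Fin M) ℝ) (hDp : Dp = -Dmᵀ)
    (u v u' v' u'' v'' : ℝ → Fin (M - 1) → ℝ)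
    (hu : ∀ t, HasDerivAt u (u' t) t) (hu' : ∀ t, HasDerivAt u' (u'' t) t)
    (hv : ∀ t, HasDerivAt v (v' t) t) (hv' : ∀ t, HasDerivAt v' (v'' t) t)
    (hequ : ∀ t, ρA • u'' t
      = Dp.mulVec (fun l => Vζ (Dm.mulVec (u t) l) (Dm.mulVec (v t) l)))
    (heqv : ∀ t, ρA • v'' t
      = Dp.mulVec (fun l => Vη (Dm.mulVec (u t) l) (Dm.mulVec (v t) l))) :
    ∀ t, HasDerivAt (fun s =>
      ρA * h / 2 * ((u' s ⬝ᵥ u' s) + (v' s ⬝ᵥ v' s))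
        + h * ∑ l, 𝒱 (Dm.mulVec (u s) l) (Dm.mulVec (v s) l)) 0 t := by
  intro t
  have hH := (((hu' t).dotProduct_self.add (hv' t).dotProduct_self).const_mul (ρA * h / 2)).add
    ((HasDerivAt.sum_comp_pair h𝒱 ((hu t).mulVec Dm) ((hv t).mulVec Dm)).const_mul h)
  have work_u : ρA * (u'' t ⬝ᵥ u' t)
      = -((fun l => Vζ ((Dm *ᵥ u t) l) ((Dm *ᵥ v t) l)) ⬝ᵥ Dm *ᵥ u' t) := by
    rw [← smul_eq_mul, ← smul_dotProduct, hequ t, mulVec_dotProduct_of_eq_neg_transpose hDp]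
  have work_v : ρA * (v'' t ⬝ᵥ v' t)
      = -((fun l => Vη ((Dm *ᵥ u t) l) ((Dm *ᵥ v t) l)) ⬝ᵥ Dm *ᵥ v' t) := by
    rw [← smul_eq_mul, ← smul_dotProduct, heqv t, mulVec_dotProduct_of_eq_neg_transpose hDp]
  refine hH.congr_deriv ?_
  linear_combination h * work_u + h * work_v

/-- Conservation of the semi-discrete energy
`H = (ρAh/2)‖q̇‖² + h Σ_l 𝒱(ζ_l, η_l)` for the semi-discrete nonlinear string
system `ρA q̈ = (1/h)[D₊∇_ζV; D₊∇_ηV]`, with `ζ = D₋u`, `η = D₋v`,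
`q = [u; v]` and `D₊ = -D₋ᵀ`, where `D₋` is the backward-difference matrix. -/
theorem stmt_16 (M : ℕ) (h ρA : ℝ) (hh : 0 < h) (hρA : 0 < ρA)
    (𝒱 Vζ Vη : ℝ → ℝ → ℝ)
    (h𝒱 : ∀ a b : ℝ, HasFDerivAt (fun z : ℝ × ℝ => 𝒱 z.1 z.2)
      (Vζ a b • ContinuousLinearMap.fst ℝ ℝ ℝ
        + Vη a b • ContinuousLinearMap.snd ℝ ℝ ℝ) (a, b))
    (Dm : Matrix (Fin M) (Fin (M - 1)) ℝ)
    (hDm : ∀ (l : Fin M) (j : Fin (M - 1)),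
      Dm l j = (if (l : ℕ) = (j : ℕ) then (1 : ℝ)
        else if (l : ℕ) = (j : ℕ) + 1 then -1 else 0) / h)
    (Dp : Matrix (Fin (M - 1)) (Fin M) ℝ) (hDp : Dp = -Dmᵀ)
    (u v u' v' u'' v'' : ℝ → Fin (M - 1) → ℝ)
    (hu : ∀ t, HasDerivAt u (u' t) t) (hu' : ∀ t, HasDerivAt u' (u'' t) t)
    (hv : ∀ t, HasDerivAt v (v' t) t) (hv' : ∀ t, HasDerivAt v' (v'' t) t)
    (hequ : ∀ t, ρA • u'' t
      = Dp.mulVec (fun l => Vζ (Dm.mulVec (u t) l) (Dm.mulVec (v t) l)))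
    (heqv : ∀ t, ρA • v'' t
      = Dp.mulVec (fun l => Vη (Dm.mulVec (u t) l) (Dm.mulVec (v t) l))) :
    ∀ t, HasDerivAt (fun s =>
      ρA * h / 2 * ((u' s ⬝ᵥ u' s) + (v' s ⬝ᵥ v' s))
        + h * ∑ l, 𝒱 (Dm.mulVec (u s) l) (Dm.mulVec (v s) l)) 0 t :=
  stmt_16_general M h ρA 𝒱 Vζ Vη h𝒱 Dm Dp hDp u v u' v' u'' v'' hu hu' hv hv' hequ heqv
end

section
/- Under the non-split explicit scheme, the update for qⁿ⁺¹ obtained by eliminating pⁿ⁺¹ᐟ² and ψⁿ⁺¹ᐟ² takes the form (I + αβᵀ)qⁿ⁺¹ = 2qⁿ - 2kα ψⁿ⁻¹ᐟ² - (I - αβᵀ)qⁿ⁻¹ with α = (k/2)M⁻¹gⁿ, β = (k/2)gⁿ; that is, any sequences satisfying the three-equation scheme (fd1) satisfy this linear update, and conversely given qⁿ, qⁿ⁻¹, ψⁿ⁻¹ᐟ² this update together with the ψ-update uniquely determines (qⁿ⁺¹, pⁿ⁺¹ᐟ², ψⁿ⁺¹ᐟ²). -/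
/-!
Substituting the `p`-update into the `q`-update and using `k M⁻¹ pⁿ⁻¹ᐟ² = qⁿ - qⁿ⁻¹` gives
`qⁿ⁺¹ = 2qⁿ - qⁿ⁻¹ - k(ψⁿ⁺¹ᐟ² + ψⁿ⁻¹ᐟ²)α`, and the `ψ`-update turns `k(ψⁿ⁺¹ᐟ² - ψⁿ⁻¹ᐟ²)` into
`βᵀ(qⁿ⁺¹ - qⁿ⁻¹)`; this is the linear update. By the matrix determinant lemma
`det (I + αβᵀ) = 1 + βᵀα = 1 + (k²/4) gᵀM⁻¹g > 0`, so the linear update fixes `qⁿ⁺¹`, and then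
the other two equations fix `ψⁿ⁺¹ᐟ²` and `pⁿ⁺¹ᐟ²`.
-/

open Matrix

theorem Matrix.det_one_add_vecMulVec {m R : Type*} [Fintype m] [DecidableEq m] [CommRing R]
    (u v : m → R) : det (1 + vecMulVec u v) = 1 + v ⬝ᵥ u := by
  rw [vecMulVec_eq Unit, det_one_add_replicateCol_mul_replicateRow]

theorem Matrix.mulVec_one_add_vecMulVec_injective {m K : Type*} [Fintype m] [DecidableEq m]
    [Field K] {u v : m → K} (h : 1 + v ⬝ᵥ u ≠ 0) :
    Function.Injective (1 + vecMulVec u v).mulVec :=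
  mulVec_injective_of_det_ne_zero (by rwa [det_one_add_vecMulVec])

section Scheme

variable {n : Type*} [Fintype n] [DecidableEq n] {k ψm ψ : ℝ} {A : Matrix n n ℝ}
  {g α β qm qn pm q p : n → ℝ}

theorem linear_update_of_scheme_step (hα : α = (k / 2) • A *ᵥ g) (hβ : β = (k / 2) • g)
    (hq0 : qn = qm + k • A *ᵥ pm) (hq : q = qn + k • A *ᵥ p)
    (hp : p = pm - (k / 2 * (ψ + ψm)) • g) (hψ : ψ = ψm + 1 / 2 * (g ⬝ᵥ (q - qm))) :
    (1 + vecMulVec α β) *ᵥ q = (2 : ℝ) • qn - (2 * k * ψm) • α - (1 - vecMulVec α β) *ᵥ qm := by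
  have hpm : k • A *ᵥ pm = qn - qm := by rw [hq0]; abel
  have hψ_sum : k * (ψ + ψm) = 2 * k * ψm + (β ⬝ᵥ q - β ⬝ᵥ qm) := by
    rw [hβ, ← dotProduct_sub, smul_dotProduct, hψ, smul_eq_mul]; ring
  have hq_elim : q = (2 : ℝ) • qn - qm - (k * (ψ + ψm)) • α := by
    rw [hq, hp, mulVec_sub, mulVec_smul, smul_sub, hpm, hα]; module
  simp only [add_mulVec, sub_mulVec, one_mulVec, vecMulVec_mulVec, op_smul_eq_smul]
  rw [hψ_sum] at hq_elim
  nth_rewrite 1 [hq_elim]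
  module

end Scheme

theorem stmt_17_general {N : ℕ} (k : ℝ)
    (M : Matrix (Fin N) (Fin N) ℝ) (hM : M.PosDef)
    (g qm qn qp pm pp : Fin N → ℝ) (ψm ψp : ℝ)
    (α β : Fin N → ℝ) (hα : α = (k / 2) • M⁻¹.mulVec g) (hβ : β = (k / 2) • g)
    (hq0 : qn = qm + k • M⁻¹.mulVec pm)
    (hq : qp = qn + k • M⁻¹.mulVec pp)
    (hp : pp = pm - (k / 2 * (ψp + ψm)) • g)
    (hψ : ψp = ψm + (1 / 2) * (g ⬝ᵥ (qp - qm))) :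
    ((1 + vecMulVec α β).mulVec qp
        = (2 : ℝ) • qn - (2 * k * ψm) • α - (1 - vecMulVec α β).mulVec qm) ∧
    (∃! w : (Fin N → ℝ) × (Fin N → ℝ) × ℝ,
      w.1 = qn + k • M⁻¹.mulVec w.2.1 ∧
      w.2.1 = pm - (k / 2 * (w.2.2 + ψm)) • g ∧
      w.2.2 = ψm + (1 / 2) * (g ⬝ᵥ (w.1 - qm))) := by
  have hupdate := linear_update_of_scheme_step hα hβ hq0 hq hp hψ
  have hβα : β ⬝ᵥ α = (k / 2) ^ 2 * (g ⬝ᵥ M⁻¹ *ᵥ g) := by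
    rw [hα, hβ, dotProduct_smul, smul_dotProduct, smul_eq_mul, smul_eq_mul]; ring
  have hgMg : 0 ≤ g ⬝ᵥ M⁻¹ *ᵥ g := by
    simpa using hM.inv.posSemidef.dotProduct_mulVec_nonneg g
  have hinj := mulVec_one_add_vecMulVec_injective (u := α) (v := β)
    (by rw [hβα]; positivity)
  refine ⟨hupdate, (qp, pp, ψp), ⟨hq, hp, hψ⟩, ?_⟩
  rintro ⟨q, p, ψ⟩ ⟨hq', hp', hψ'⟩
  obtain rfl : q = qp :=
    hinj ((linear_update_of_scheme_step hα hβ hq0 hq' hp' hψ').trans hupdate.symm)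
  obtain rfl : ψ = ψp := hψ'.trans hψ.symm
  obtain rfl : p = pp := hp'.trans hp.symm
  rfl

/-- One step of the non-split scheme (fd1): eliminating `pⁿ⁺¹ᐟ²` and `ψⁿ⁺¹ᐟ²`
yields the linear update `(I + αβᵀ)qⁿ⁺¹ = 2qⁿ - 2kα ψⁿ⁻¹ᐟ² - (I - αβᵀ)qⁿ⁻¹`
with `α = (k/2)M⁻¹g`, `β = (k/2)g`; conversely, given `qⁿ, qⁿ⁻¹, ψⁿ⁻¹ᐟ², pⁿ⁻¹ᐟ²`,
the scheme uniquely determines `(qⁿ⁺¹, pⁿ⁺¹ᐟ², ψⁿ⁺¹ᐟ²)`.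
Here `qm, qn, qp` denote `qⁿ⁻¹, qⁿ, qⁿ⁺¹`; `pm, pp` denote `pⁿ⁻¹ᐟ², pⁿ⁺¹ᐟ²`;
`ψm, ψp` denote `ψⁿ⁻¹ᐟ², ψⁿ⁺¹ᐟ²`; `g` denotes `gⁿ`. -/
theorem stmt_17 {N : ℕ} (k : ℝ) (hk : 0 < k)
    (M : Matrix (Fin N) (Fin N) ℝ) (hM : M.PosDef)
    (g qm qn qp pm pp : Fin N → ℝ) (ψm ψp : ℝ)
    (α β : Fin N → ℝ) (hα : α = (k / 2) • M⁻¹.mulVec g) (hβ : β = (k / 2) • g)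
    (hq0 : qn = qm + k • M⁻¹.mulVec pm)
    (hq : qp = qn + k • M⁻¹.mulVec pp)
    (hp : pp = pm - (k / 2 * (ψp + ψm)) • g)
    (hψ : ψp = ψm + (1 / 2) * (g ⬝ᵥ (qp - qm))) :
    ((1 + vecMulVec α β).mulVec qp
        = (2 : ℝ) • qn - (2 * k * ψm) • α - (1 - vecMulVec α β).mulVec qm) ∧
    (∃! w : (Fin N → ℝ) × (Fin N → ℝ) × ℝ,
      w.1 = qn + k • M⁻¹.mulVec w.2.1 ∧
      w.2.1 = pm - (k / 2 * (w.2.2 + ψm)) • g ∧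
      w.2.2 = ψm + (1 / 2) * (g ⬝ᵥ (w.1 - qm))) :=
  stmt_17_general k M hM g qm qn qp pm pp ψm ψp α β hα hβ hq0 hq hp hψ
end

section
/- If the potential V is bounded above with V(q) ≤ 0 for all q (e.g., a gravitational potential), setting V = -(1/2)ψ² with ψ(q) = √(-2V(q)), the analogous three-equation scheme qⁿ⁺¹ = qⁿ + kM⁻¹pⁿ⁺¹ᐟ², pⁿ⁺¹ᐟ² = pⁿ⁻¹ᐟ² + (k/2)gⁿ(ψⁿ⁺¹ᐟ² + ψⁿ⁻¹ᐟ²), ψⁿ⁺¹ᐟ² = ψⁿ⁻¹ᐟ² + (1/2)(gⁿ)ᵀ(qⁿ⁺¹ - qⁿ⁻¹) exactly conserves Hⁿ⁺¹ᐟ² = (1/2)(pⁿ⁺¹ᐟ²)ᵀM⁻¹pⁿ⁺¹ᐟ² - (1/2)(ψⁿ⁺¹ᐟ²)². -/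
open Matrix

/-- For a nonpositive potential (`V = -(1/2)ψ²`), the sign-flipped scheme
exactly conserves `Hⁿ⁺¹ᐟ² = ½ (pⁿ⁺¹ᐟ²)ᵀM⁻¹pⁿ⁺¹ᐟ² - ½ (ψⁿ⁺¹ᐟ²)²`.
Indexing: `p n`, `ψ n` stand for `pⁿ⁺¹ᐟ²`, `ψⁿ⁺¹ᐟ²`; `q n` for `qⁿ`,
`g n` for `gⁿ`. -/
theorem stmt_18 {N : ℕ} (k : ℝ) (hk : 0 < k)
    (M : Matrix (Fin N) (Fin N) ℝ) (hM : M.PosDef)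
    (q p g : ℕ → Fin N → ℝ) (ψ : ℕ → ℝ)
    (hq : ∀ n, q (n + 1) = q n + k • M⁻¹.mulVec (p n))
    (hp : ∀ n, p (n + 1) = p n + (k / 2 * (ψ (n + 1) + ψ n)) • g (n + 1))
    (hψ : ∀ n, ψ (n + 1) = ψ n + (1 / 2) * (g (n + 1) ⬝ᵥ (q (n + 2) - q n))) :
    ∀ n, (1 / 2) * (p (n + 1) ⬝ᵥ M⁻¹.mulVec (p (n + 1))) - (1 / 2) * ψ (n + 1) ^ 2
      = (1 / 2) * (p n ⬝ᵥ M⁻¹.mulVec (p n)) - (1 / 2) * ψ n ^ 2 := by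
  intro n
  have hT : M⁻¹ᵀ = M⁻¹ := by
    have := hM.isHermitian.inv
    simpa [Matrix.IsHermitian] using this
  have hsym : ∀ x y : Fin N → ℝ, x ⬝ᵥ M⁻¹.mulVec y = y ⬝ᵥ M⁻¹.mulVec x := by
    intro x y
    rw [Matrix.dotProduct_mulVec, ← hT, Matrix.vecMul_transpose, dotProduct_comm, hT]
  set c : ℝ := k / 2 * (ψ (n + 1) + ψ n) with hc
  have hqdiff : q (n + 2) - q n
      = k • M⁻¹.mulVec (p (n + 1)) + k • M⁻¹.mulVec (p n) := by
    have h1 := hq n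
    have h2 := hq (n + 1)
    rw [show n + 1 + 1 = n + 2 from rfl] at h2
    rw [h2, h1]; abel
  set a : ℝ := g (n + 1) ⬝ᵥ M⁻¹.mulVec (p n) with ha
  set b : ℝ := g (n + 1) ⬝ᵥ M⁻¹.mulVec (g (n + 1)) with hb
  have hp' : p (n + 1) = p n + c • g (n + 1) := hp n
  have hpp : p (n + 1) ⬝ᵥ M⁻¹.mulVec (p (n + 1))
      = p n ⬝ᵥ M⁻¹.mulVec (p n) + 2 * c * a + c ^ 2 * b := by
    rw [hp']
    simp only [Matrix.mulVec_add, Matrix.mulVec_smul, add_dotProduct,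
      dotProduct_add, smul_dotProduct, dotProduct_smul,
      smul_eq_mul]
    rw [hsym (p n) (g (n + 1))]
    simp only [← ha, ← hb]
    ring
  have hgp' : g (n + 1) ⬝ᵥ M⁻¹.mulVec (p (n + 1)) = a + c * b := by
    rw [hp', Matrix.mulVec_add, Matrix.mulVec_smul, dotProduct_add,
      dotProduct_smul]
    simp only [smul_eq_mul, ← ha, ← hb]
  have hψd : ψ (n + 1) - ψ n = k / 2 * (2 * a + c * b) := by
    have := hψ n
    rw [hqdiff, dotProduct_add, dotProduct_smul,
      dotProduct_smul, hgp'] at this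
    simp only [smul_eq_mul, ← ha] at this
    rw [this]; ring
  have hψs : ψ (n + 1) + ψ n = 2 / k * c := by
    rw [hc]; field_simp
  have key : ψ (n + 1) ^ 2 - ψ n ^ 2 = 2 * c * a + c ^ 2 * b := by
    have : ψ (n + 1) ^ 2 - ψ n ^ 2 = (ψ (n + 1) + ψ n) * (ψ (n + 1) - ψ n) := by ring
    rw [this, hψs, hψd]
    field_simp
  rw [hpp]
  nlinarith [key]
end
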